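/- arXiv:math/0501309 — 6 statements merged into one kernel-verified Lean document; each statement's English description precedes it below -/
import Mathlib

section
/- Let p be a prime and let R denote the ring of integer-valued polynomials, i.e. polynomials f(z) ∈ ℚ_p[z] with f(ℤ_p) ⊆ ℤ_p (equivalently, ℤ_p-linear combinations of binomial coefficient polynomials C(z,k)). For N ≥ 1 define S_N := { c + Σ_{i=1}^N p^i h_i(z) : c ∈ ℤ_p, h_i ∈ R, deg(h_i) ≤ 2i−1 } and T_N := S_N + { Σ_{i=1}^M p^i h_i(z) : M ≥ 1, h_i ∈ R, deg(h_i) ≤ 2i−2 }. Then the ℤ_p-subalgebra of R generated by S_N is contained in T_N. -/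
open Polynomial Finset

section Aux
variable {p : ℕ} [Fact p.Prime]

private def Rs (p : ℕ) [Fact p.Prime] : Set (Polynomial ℚ_[p]) :=
  {f | ∀ x : ℤ_[p], ‖f.eval (x : ℚ_[p])‖ ≤ 1}

private lemma Rs_zero : (0 : Polynomial ℚ_[p]) ∈ Rs p := fun x => by simp

private lemma Rs_C (c : ℤ_[p]) : (C (c : ℚ_[p])) ∈ Rs p := fun x => by simpa using c.2

private lemma Rs_add {f g : Polynomial ℚ_[p]} (hf : f ∈ Rs p) (hg : g ∈ Rs p) :
    f + g ∈ Rs p := fun x => by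
  rw [eval_add]
  exact (Padic.nonarchimedean _ _).trans (max_le (hf x) (hg x))

private lemma Rs_mul {f g : Polynomial ℚ_[p]} (hf : f ∈ Rs p) (hg : g ∈ Rs p) :
    f * g ∈ Rs p := fun x => by
  rw [eval_mul, norm_mul]
  exact mul_le_one₀ (hf x) (norm_nonneg _) (hg x)

private def Ebd (N k : ℕ) : ℕ := if k = 0 then 0 else if k ≤ N then 2*k-1 else 2*k-2

private lemma Ebd_add (N i j : ℕ) : Ebd N i + Ebd N j ≤ Ebd N (i+j) := by
  unfold Ebd; split_ifs <;> omega

private def Wset (p N : ℕ) [Fact p.Prime] : Set (Polynomial ℚ_[p]) :=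
  {f | ∃ k g, g ∈ Rs p ∧ g.degree ≤ (Ebd N k : ℕ) ∧ f = (p : ℚ_[p]) ^ k • g}

private lemma Wset_mul {N : ℕ} {a b : Polynomial ℚ_[p]} (ha : a ∈ Wset p N)
    (hb : b ∈ Wset p N) : a * b ∈ Wset p N := by
  obtain ⟨i, g, hg, hdg, rfl⟩ := ha
  obtain ⟨j, g', hg', hdg', rfl⟩ := hb
  refine ⟨i + j, g * g', Rs_mul hg hg', ?_, by rw [smul_mul_smul_comm, pow_add]⟩
  refine (degree_mul_le _ _).trans ?_
  calc g.degree + g'.degree ≤ ((Ebd N i : ℕ) : WithBot ℕ) + ((Ebd N j : ℕ) : WithBot ℕ) :=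
        add_le_add hdg hdg'
    _ = ((Ebd N i + Ebd N j : ℕ) : WithBot ℕ) := by push_cast; ring
    _ ≤ _ := by exact_mod_cast Ebd_add N i j

private lemma closure_mul {N : ℕ} {a b : Polynomial ℚ_[p]}
    (ha : a ∈ AddSubmonoid.closure (Wset p N)) (hb : b ∈ AddSubmonoid.closure (Wset p N)) :
    a * b ∈ AddSubmonoid.closure (Wset p N) := by
  refine AddSubmonoid.closure_induction (fun x hx => ?_)
    (by rw [zero_mul]; exact zero_mem _)
    (fun x y _ _ hx hy => by rw [add_mul]; exact add_mem hx hy) ha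
  refine AddSubmonoid.closure_induction (fun y hy => AddSubmonoid.subset_closure (Wset_mul hx hy))
    (by rw [mul_zero]; exact zero_mem _)
    (fun y z _ _ hy hz => by rw [mul_add]; exact add_mem hy hz) hb

private lemma sum_extend {M K : ℕ} (hMK : M ≤ K) (g : ℕ → Polynomial ℚ_[p])
    (hg : ∀ k, M ≤ k → g k = 0) :
    ∑ k ∈ Finset.range K, (p : ℚ_[p]) ^ k • g k
      = ∑ k ∈ Finset.range M, (p : ℚ_[p]) ^ k • g k := by
  refine (Finset.sum_subset (Finset.range_subset_range.mpr hMK) fun k _ hk' => ?_).symm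
  rw [hg k (Nat.le_of_not_lt fun h => hk' (Finset.mem_range.mpr h)), smul_zero]

private lemma good_of_closure {N : ℕ} {f : Polynomial ℚ_[p]}
    (hf : f ∈ AddSubmonoid.closure (Wset p N)) :
    ∃ (M : ℕ) (g : ℕ → Polynomial ℚ_[p]),
      (∀ k, g k ∈ Rs p ∧ (g k).degree ≤ (Ebd N k : ℕ)) ∧ (∀ k, M ≤ k → g k = 0) ∧
      f = ∑ k ∈ Finset.range M, (p : ℚ_[p]) ^ k • g k := by
  refine AddSubmonoid.closure_induction (fun x hx => ?_) ⟨0, 0, fun k => ⟨Rs_zero, by simp⟩,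
    fun k _ => rfl, by simp⟩ (fun x y _ _ hx hy => ?_) hf
  · obtain ⟨k0, g0, hg0, hd0, rfl⟩ := hx
    refine ⟨k0 + 1, fun k => if k = k0 then g0 else 0, fun k => ?_, fun k hk => ?_, ?_⟩
    · beta_reduce
      split_ifs with h
      · subst h; exact ⟨hg0, hd0⟩
      · exact ⟨Rs_zero, by simp⟩
    · beta_reduce
      rw [if_neg]; omega
    · rw [Finset.sum_eq_single k0 (fun b _ hb => by beta_reduce; rw [if_neg hb, smul_zero])
        (fun h => absurd (Finset.self_mem_range_succ k0) h)]
      beta_reduce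
      rw [if_pos rfl]
  · obtain ⟨M1, g1, hg1, ht1, rfl⟩ := hx
    obtain ⟨M2, g2, hg2, ht2, rfl⟩ := hy
    refine ⟨max M1 M2, g1 + g2, fun k => ⟨Rs_add (hg1 k).1 (hg2 k).1, ?_⟩, fun k hk => ?_, ?_⟩
    · exact (degree_add_le _ _).trans (max_le (hg1 k).2 (hg2 k).2)
    · show g1 k + g2 k = 0
      rw [ht1 k (le_trans (le_max_left _ _) hk), ht2 k (le_trans (le_max_right _ _) hk), add_zero]
    · rw [← sum_extend (le_max_left M1 M2) g1 ht1, ← sum_extend (le_max_right M1 M2) g2 ht2,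
        ← Finset.sum_add_distrib]
      exact Finset.sum_congr rfl fun k _ => by rw [Pi.add_apply, smul_add]

end Aux

/-- The subalgebra of integer-valued polynomials generated by `S_N` is contained in `T_N`. -/
theorem stmt0 (p : ℕ) [Fact p.Prime] (N : ℕ) (hN : 1 ≤ N)
    (R : Set (Polynomial ℚ_[p]))
    (hR : R = {f : Polynomial ℚ_[p] | ∀ x : ℤ_[p], ‖f.eval (x : ℚ_[p])‖ ≤ 1})
    (S T : Set (Polynomial ℚ_[p]))
    (hS : S = {f : Polynomial ℚ_[p] | ∃ (c : ℤ_[p]) (h : Fin N → Polynomial ℚ_[p]),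
        (∀ i, h i ∈ R ∧ (h i).degree ≤ (2 * (i : ℕ) + 1 : ℕ)) ∧
        f = C (c : ℚ_[p]) + ∑ i : Fin N, (p : ℚ_[p]) ^ ((i : ℕ) + 1) • h i})
    (hT : T = {f : Polynomial ℚ_[p] | ∃ g ∈ S, ∃ (M : ℕ) (h : Fin M → Polynomial ℚ_[p]),
        1 ≤ M ∧ (∀ i, h i ∈ R ∧ (h i).degree ≤ (2 * (i : ℕ) : ℕ)) ∧
        f = g + ∑ i : Fin M, (p : ℚ_[p]) ^ ((i : ℕ) + 1) • h i}) :
    ∀ f ∈ Algebra.adjoin ℤ_[p] S, f ∈ T := by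
  subst hR hS hT
  have hEb1 : ∀ k, k < N → Ebd N (k+1) = 2*k+1 := fun k hk => by
    unfold Ebd; rw [if_neg (by omega), if_pos (by omega)]; omega
  have hEb2 : ∀ k, N ≤ k → Ebd N (k+1) = 2*k := fun k hk => by
    unfold Ebd; rw [if_neg (by omega), if_neg (by omega)]; omega
  intro f hf
  have hW : f ∈ AddSubmonoid.closure (Wset p N) := by
    refine Algebra.adjoin_induction (fun x hx => ?_) (fun r => ?_)
      (fun x y _ _ hx hy => add_mem hx hy) (fun x y _ _ hx hy => closure_mul hx hy) hf
    · obtain ⟨c, h, hh, rfl⟩ := hx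
      refine add_mem
        (AddSubmonoid.subset_closure ⟨0, C (c : ℚ_[p]), Rs_C c,
          by simpa [Ebd] using degree_C_le, by simp⟩) ?_
      refine sum_mem fun i _ => AddSubmonoid.subset_closure ⟨(i : ℕ) + 1, h i, (hh i).1, ?_, rfl⟩
      rw [hEb1 (i : ℕ) i.2]
      exact_mod_cast (hh i).2
    · have hr : (algebraMap ℤ_[p] (Polynomial ℚ_[p])) r = C ((r : ℚ_[p])) := rfl
      rw [hr]
      exact AddSubmonoid.subset_closure ⟨0, C (r : ℚ_[p]), Rs_C r,
        by simpa [Ebd] using degree_C_le, by simp⟩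
  obtain ⟨M, g, hg, htail, rfl⟩ := good_of_closure hW
  set K := M + N with hK
  have hMK : M ≤ K + 1 := by omega
  have hNK : N ≤ K := by omega
  have h1K : 1 ≤ K := by omega
  rw [← sum_extend hMK g htail]
  have hd0 : (g 0).degree ≤ 0 := by simpa [Ebd] using (hg 0).2
  have hg0 : g 0 = C ((g 0).coeff 0) := eq_C_of_degree_le_zero hd0
  have hRg : ∀ x : ℤ_[p], ‖(g 0).eval (x : ℚ_[p])‖ ≤ 1 := (hg 0).1
  have ha : ‖(g 0).coeff 0‖ ≤ 1 := by
    have := hRg 0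
    rwa [hg0, eval_C] at this
  refine ⟨C (((⟨(g 0).coeff 0, ha⟩ : ℤ_[p]) : ℚ_[p]))
      + ∑ i : Fin N, (p : ℚ_[p]) ^ ((i : ℕ) + 1) • g ((i : ℕ) + 1),
    ⟨⟨(g 0).coeff 0, ha⟩, fun i => g ((i : ℕ) + 1), fun i => ⟨(hg _).1, ?_⟩, rfl⟩,
    K, fun i => if (i : ℕ) < N then 0 else g ((i : ℕ) + 1), h1K, fun i => ?_, ?_⟩
  · rw [show ((2 * (i : ℕ) + 1 : ℕ) : WithBot ℕ) = ((Ebd N ((i : ℕ) + 1) : ℕ) : WithBot ℕ)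
      from by rw [hEb1 (i : ℕ) i.2]]
    exact (hg _).2
  · beta_reduce
    split_ifs with h
    · exact ⟨Rs_zero, by simp⟩
    · refine ⟨(hg _).1, ?_⟩
      rw [show ((2 * (i : ℕ) : ℕ) : WithBot ℕ) = ((Ebd N ((i : ℕ) + 1) : ℕ) : WithBot ℕ)
        from by rw [hEb2 (i : ℕ) (Nat.le_of_not_lt h)]]
      exact (hg _).2
  · have e1 : ∑ i : Fin N, (p : ℚ_[p]) ^ ((i : ℕ) + 1) • g ((i : ℕ) + 1)
        = ∑ k ∈ Finset.range N, (p : ℚ_[p]) ^ (k + 1) • g (k + 1) :=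
      Fin.sum_univ_eq_sum_range (fun k => (p : ℚ_[p]) ^ (k + 1) • g (k + 1)) N
    have e2 : ∑ i : Fin K, (p : ℚ_[p]) ^ ((i : ℕ) + 1) • (if (i : ℕ) < N then 0 else g ((i : ℕ) + 1))
        = ∑ k ∈ Finset.range K, (p : ℚ_[p]) ^ (k + 1) • (if k < N then 0 else g (k + 1)) :=
      Fin.sum_univ_eq_sum_range (fun k => (p : ℚ_[p]) ^ (k + 1) • (if k < N then 0 else g (k + 1))) K
    rw [e1, e2]
    have e3 : ∑ k ∈ Finset.range N, (p : ℚ_[p]) ^ (k + 1) • g (k + 1)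
        = ∑ k ∈ Finset.range K, (if k < N then (p : ℚ_[p]) ^ (k + 1) • g (k + 1) else 0) :=
      calc ∑ k ∈ Finset.range N, (p : ℚ_[p]) ^ (k + 1) • g (k + 1)
          = ∑ k ∈ Finset.range N, (if k < N then (p : ℚ_[p]) ^ (k + 1) • g (k + 1) else 0) :=
            Finset.sum_congr rfl fun k hk => (if_pos (Finset.mem_range.mp hk)).symm
        _ = _ := Finset.sum_subset (Finset.range_subset_range.mpr hNK)
            (fun k _ hk => if_neg fun h => hk (Finset.mem_range.mpr h))
    rw [e3]
    conv_rhs => rw [add_assoc, ← Finset.sum_add_distrib]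
    have e4 : ∀ k ∈ Finset.range K,
        (if k < N then (p : ℚ_[p]) ^ (k + 1) • g (k + 1) else 0)
          + (p : ℚ_[p]) ^ (k + 1) • (if k < N then 0 else g (k + 1))
        = (p : ℚ_[p]) ^ (k + 1) • g (k + 1) := by
      intro k _; split_ifs <;> simp
    rw [Finset.sum_congr rfl e4, Finset.sum_range_succ' (fun k => (p : ℚ_[p]) ^ k • g k) K]
    rw [pow_zero, one_smul]
    conv_lhs => rw [hg0]
    exact add_comm _ _
end

section
/- Let f(z) = Σ_{k≥0} a_k z^k be a power series with a_k ∈ ℤ_p, a_k → 0, and not all a_k zero. Then f has only finitely many zeros in ℤ_p (Strassman's theorem). Consequently, if a ℤ_p-convergent power series vanishes at infinitely many points of ℤ_p, it is identically zero. -/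
/-!
Strassmann's argument. Let `N` be the last index at which `‖a k‖` is maximal. If `N = 0`, the
constant term strictly dominates every other term on the closed unit ball, so there are no zeros.
Otherwise, at a zero `α` the series factors as `f z = (z - α) * g z`, where the coefficients
`∑ j, a (j + i + 1) * α ^ j` of `g` still tend to zero and have last maximal index `N - 1`;
by induction `f` has at most `N` zeros in the closed unit ball.
-/

open Filter Topology

theorem Filter.Tendsto.exists_forall_norm_le_norm {ι E : Type*} [Nonempty ι]
    [SeminormedAddGroup E] {f : ι → E} (hf : Tendsto f cofinite (𝓝 0)) :
    ∃ i, ∀ j, ‖f j‖ ≤ ‖f i‖ := by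
  by_cases! h : ∃ i₀, 0 < ‖f i₀‖
  · obtain ⟨i₀, hi₀⟩ := h
    have hlarge : {j | ‖f i₀‖ ≤ ‖f j‖}.Finite := by
      simpa only [not_lt] using eventually_cofinite.1
        ((tendsto_zero_iff_norm_tendsto_zero.1 hf).eventually (gt_mem_nhds hi₀))
    obtain ⟨i, -, hmax⟩ := Set.exists_max_image _ (‖f ·‖) hlarge ⟨i₀, le_refl ‖f i₀‖⟩
    refine ⟨i, fun j => ?_⟩
    by_cases hj : ‖f i₀‖ ≤ ‖f j‖
    · exact hmax j hj
    · exact (not_le.1 hj).le.trans (hmax i₀ (le_refl ‖f i₀‖))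
  · exact ⟨Classical.arbitrary ι, fun j => (h j).trans (norm_nonneg _)⟩

theorem Summable.norm_tsum_lt_of_forall_norm_lt {ι E : Type*} [Nonempty ι]
    [SeminormedAddCommGroup E] [IsUltrametricDist E] {f : ι → E} (hf : Summable f) {C : ℝ}
    (h : ∀ i, ‖f i‖ < C) : ‖∑' i, f i‖ < C := by
  obtain ⟨i, hi⟩ := hf.tendsto_cofinite_zero.exists_forall_norm_le_norm
  exact (IsUltrametricDist.norm_tsum_le_of_forall_le hi).trans_lt (h i)

theorem norm_mul_pow_le_of_norm_le_one {R : Type*} [SeminormedRing R] (c : R) {z : R}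
    (hz : ‖z‖ ≤ 1) (k : ℕ) : ‖c * z ^ k‖ ≤ ‖c‖ := by
  induction k with
  | zero => simp
  | succ k ih =>
    rw [pow_succ, ← mul_assoc]
    exact (norm_mul_le _ _).trans ((mul_le_of_le_one_right (norm_nonneg _) hz).trans ih)

/-- The coefficients of `(f z - f α) / (z - α)` for `f z = ∑' k, a k * z ^ k`. -/
noncomputable def dslopeCoeff {R : Type*} [Semiring R] [TopologicalSpace R] (a : ℕ → R) (α : R)
    (i : ℕ) : R :=
  ∑' j, a (j + (i + 1)) * α ^ j

/-- The `N` of Strassmann's theorem, which bounds the number of zeros. -/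
def IsLastMaxNormIndex {R : Type*} [Norm R] (a : ℕ → R) (n : ℕ) : Prop :=
  (∀ k, ‖a k‖ ≤ ‖a n‖) ∧ ∀ k, n < k → ‖a k‖ < ‖a n‖

def unitBallZeros {R : Type*} [Semiring R] [Norm R] [TopologicalSpace R] (a : ℕ → R) : Set R :=
  {z | ‖z‖ ≤ 1 ∧ ∑' k, a k * z ^ k = 0}

theorem exists_isLastMaxNormIndex {R : Type*} [NormedAddGroup R] {a : ℕ → R}
    (ha : Tendsto a atTop (𝓝 0)) (hne : a ≠ 0) : ∃ n, IsLastMaxNormIndex a n := by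
  rw [← Nat.cofinite_eq_atTop] at ha
  obtain ⟨i, hi⟩ := ha.exists_forall_norm_le_norm
  obtain ⟨k, hk⟩ := Function.ne_iff.1 hne
  have hpos : 0 < ‖a i‖ := (norm_pos_iff.2 hk).trans_le (hi k)
  have hmaxima : {k | ‖a i‖ ≤ ‖a k‖}.Finite := by
    simpa only [not_lt] using eventually_cofinite.1
      ((tendsto_zero_iff_norm_tendsto_zero.1 ha).eventually (gt_mem_nhds hpos))
  obtain ⟨n, hn, hlast⟩ := Set.exists_max_image _ id hmaxima ⟨i, le_refl ‖a i‖⟩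
  refine ⟨n, fun k => (hi k).trans hn, fun k hk => ?_⟩
  by_contra! hle
  exact (hlast k (hn.trans hle)).not_gt hk

theorem summable_mul_pow {R : Type*} [NormedRing R] [IsUltrametricDist R] [CompleteSpace R]
    {a : ℕ → R} (ha : Tendsto a atTop (𝓝 0)) {z : R} (hz : ‖z‖ ≤ 1) :
    Summable fun k => a k * z ^ k :=
  NonarchimedeanAddGroup.summable_of_tendsto_cofinite_zero <| Nat.cofinite_eq_atTop ▸
    squeeze_zero_norm (fun k => norm_mul_pow_le_of_norm_le_one (a k) hz k)
      (tendsto_zero_iff_norm_tendsto_zero.1 ha)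

theorem norm_tsum_mul_pow_eq_norm_zero {R : Type*} [NormedRing R] [IsUltrametricDist R]
    [CompleteSpace R] {a : ℕ → R} (ha : Tendsto a atTop (𝓝 0)) (hlt : ∀ k, ‖a (k + 1)‖ < ‖a 0‖)
    {z : R} (hz : ‖z‖ ≤ 1) : ‖∑' k, a k * z ^ k‖ = ‖a 0‖ := by
  have hsum := summable_mul_pow ha hz
  have htail : ‖∑' k, a (k + 1) * z ^ (k + 1)‖ < ‖a 0‖ :=
    ((summable_nat_add_iff 1).2 hsum).norm_tsum_lt_of_forall_norm_lt fun k =>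
      (norm_mul_pow_le_of_norm_le_one _ hz _).trans_lt (hlt k)
  rw [hsum.tsum_eq_zero_add, pow_zero, mul_one,
    IsUltrametricDist.norm_add_eq_max_of_norm_ne_norm htail.ne', max_eq_left htail.le]

section NormedRing

variable {R : Type*} [NormedRing R] [IsUltrametricDist R] [CompleteSpace R]
  {a : ℕ → R} {α : R}

theorem summable_dslopeCoeff_terms (ha : Tendsto a atTop (𝓝 0)) (hα : ‖α‖ ≤ 1) (i : ℕ) :
    Summable fun j => a (j + (i + 1)) * α ^ j :=
  summable_mul_pow ((tendsto_add_atTop_iff_nat (i + 1)).2 ha) hα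

theorem tendsto_dslopeCoeff (ha : Tendsto a atTop (𝓝 0)) (hα : ‖α‖ ≤ 1) :
    Tendsto (dslopeCoeff a α) atTop (𝓝 0) := by
  refine NormedAddGroup.tendsto_nhds_zero.2 fun ε hε => ?_
  obtain ⟨K, hK⟩ := eventually_atTop.1 (NormedAddGroup.tendsto_nhds_zero.1 ha ε hε)
  filter_upwards [eventually_ge_atTop K] with i hi
  exact (summable_dslopeCoeff_terms ha hα i).norm_tsum_lt_of_forall_norm_lt fun j =>
    (norm_mul_pow_le_of_norm_le_one _ hα _).trans_lt (hK _ (by omega))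

theorem isLastMaxNormIndex_dslopeCoeff {n : ℕ} (h : IsLastMaxNormIndex a (n + 1))
    (ha : Tendsto a atTop (𝓝 0)) (hα : ‖α‖ ≤ 1) : IsLastMaxNormIndex (dslopeCoeff a α) n := by
  have hn : ‖dslopeCoeff a α n‖ = ‖a (n + 1)‖ := by
    simpa [dslopeCoeff] using norm_tsum_mul_pow_eq_norm_zero
      ((tendsto_add_atTop_iff_nat (n + 1)).2 ha)
      (fun j => by simpa using h.2 (j + 1 + (n + 1)) (by omega)) hα
  refine ⟨fun k => hn ▸ ?_, fun k hk => hn ▸ ?_⟩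
  · exact IsUltrametricDist.norm_tsum_le_of_forall_le fun j =>
      (norm_mul_pow_le_of_norm_le_one _ hα _).trans (h.1 _)
  · exact (summable_dslopeCoeff_terms ha hα k).norm_tsum_lt_of_forall_norm_lt fun j =>
      (norm_mul_pow_le_of_norm_le_one _ hα _).trans_lt (h.2 _ (by omega))

end NormedRing

section NormedCommRing

variable {R : Type*} [NormedCommRing R] [IsUltrametricDist R] [CompleteSpace R]
  {a : ℕ → R} {α : R}

theorem dslopeCoeff_eq_add_mul (ha : Tendsto a atTop (𝓝 0)) (hα : ‖α‖ ≤ 1) (i : ℕ) :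
    dslopeCoeff a α i = a (i + 1) + α * dslopeCoeff a α (i + 1) := by
  rw [dslopeCoeff, (summable_dslopeCoeff_terms ha hα i).tsum_eq_zero_add, dslopeCoeff,
    ← (summable_dslopeCoeff_terms ha hα (i + 1)).tsum_mul_left]
  simp only [zero_add, pow_zero, mul_one, pow_succ]
  congr 1
  exact tsum_congr fun j => by rw [show j + 1 + (i + 1) = j + (i + 1 + 1) by omega]; ring

theorem tsum_mul_pow_sub_tsum_mul_pow (ha : Tendsto a atTop (𝓝 0)) {z : R} (hz : ‖z‖ ≤ 1)
    (hα : ‖α‖ ≤ 1) :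
    ∑' k, a k * z ^ k - ∑' k, a k * α ^ k = (z - α) * ∑' i, dslopeCoeff a α i * z ^ i := by
  have hb := summable_mul_pow (tendsto_dslopeCoeff ha hα) hz
  have hb' := (summable_nat_add_iff 1).2 hb
  have hfα : ∑' k, a k * α ^ k = a 0 + α * dslopeCoeff a α 0 := by
    rw [(summable_mul_pow ha hα).tsum_eq_zero_add, dslopeCoeff,
      ← (summable_dslopeCoeff_terms ha hα 0).tsum_mul_left]
    simp only [pow_zero, mul_one, zero_add, pow_succ]
    exact congrArg _ (tsum_congr fun j => by ring)
  have hshift : ∑' i, dslopeCoeff a α (i + 1) * z ^ (i + 1) =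
      ∑' i, dslopeCoeff a α i * z ^ i - dslopeCoeff a α 0 := by
    rw [hb.tsum_eq_zero_add, pow_zero, mul_one, add_sub_cancel_left]
  -- with `b = dslopeCoeff a α` and `g = ∑' i, b i * z ^ i`, the recurrence
  -- `b i = a (i + 1) + α * b (i + 1)` makes `z * g - α * (g - b 0)` telescope to `f z - a 0`
  have hfz : ∑' k, a k * z ^ k = a 0 + (z * ∑' i, dslopeCoeff a α i * z ^ i -
      α * (∑' i, dslopeCoeff a α i * z ^ i - dslopeCoeff a α 0)) := by
    rw [(summable_mul_pow ha hz).tsum_eq_zero_add, pow_zero, mul_one, ← hshift,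
      ← hb.tsum_mul_left, ← hb'.tsum_mul_left, ← (hb.mul_left z).tsum_sub (hb'.mul_left α)]
    refine congrArg _ (tsum_congr fun i => ?_)
    rw [dslopeCoeff_eq_add_mul ha hα i]
    ring
  rw [hfz, hfα]
  ring

theorem unitBallZeros_subset_insert [NoZeroDivisors R] (ha : Tendsto a atTop (𝓝 0))
    (hα : α ∈ unitBallZeros a) :
    unitBallZeros a ⊆ insert α (unitBallZeros (dslopeCoeff a α)) := by
  rintro z ⟨hz, hfz⟩
  have hfactor := tsum_mul_pow_sub_tsum_mul_pow ha hz hα.1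
  rw [hfz, hα.2, sub_zero, eq_comm, mul_eq_zero, sub_eq_zero] at hfactor
  exact hfactor.imp id fun hg => ⟨hz, hg⟩

theorem IsLastMaxNormIndex.encard_unitBallZeros_le [NoZeroDivisors R] {n : ℕ}
    (h : IsLastMaxNormIndex a n) (ha : Tendsto a atTop (𝓝 0)) :
    (unitBallZeros a).encard ≤ n := by
  induction n generalizing a with
  | zero =>
    suffices unitBallZeros a = ∅ by simp [this]
    refine Set.eq_empty_of_forall_notMem fun z ⟨hz, hfz⟩ => ?_
    have h0 : ‖a 0‖ = 0 := by
      rw [← norm_tsum_mul_pow_eq_norm_zero ha (fun k => h.2 _ k.succ_pos) hz, hfz, norm_zero]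
    exact (h.2 1 one_pos).not_ge (h0 ▸ norm_nonneg _)
  | succ n ih =>
    rcases (unitBallZeros a).eq_empty_or_nonempty with hempty | ⟨α, hα⟩
    · simp [hempty]
    calc (unitBallZeros a).encard
        ≤ (insert α (unitBallZeros (dslopeCoeff a α))).encard :=
          Set.encard_le_encard (unitBallZeros_subset_insert ha hα)
      _ ≤ (unitBallZeros (dslopeCoeff a α)).encard + 1 := Set.encard_insert_le _ _
      _ ≤ n + 1 := by
          gcongr
          exact ih (isLastMaxNormIndex_dslopeCoeff h ha hα.1) (tendsto_dslopeCoeff ha hα.1)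
      _ = ↑(n + 1) := by push_cast; rfl

end NormedCommRing

/-- Strassman's theorem: a not-identically-zero power series with coefficients in `ℤ_p`
tending to zero has finitely many zeros in `ℤ_p`; consequently, if it has infinitely many
zeros it is identically zero. -/
theorem stmt7 (p : ℕ) [Fact p.Prime] (a : ℕ → ℤ_[p])
    (ha : Filter.Tendsto (fun k => ‖a k‖) Filter.atTop (nhds 0)) :
    (a ≠ 0 → {z : ℤ_[p] | (∑' k : ℕ, a k * z ^ k) = 0}.Finite) ∧
    ({z : ℤ_[p] | (∑' k : ℕ, a k * z ^ k) = 0}.Infinite → a = 0) := by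
  have ha' : Tendsto a atTop (𝓝 0) := tendsto_zero_iff_norm_tendsto_zero.2 ha
  have hzeros : {z : ℤ_[p] | (∑' k : ℕ, a k * z ^ k) = 0} = unitBallZeros a := by
    ext z
    simp [unitBallZeros, PadicInt.norm_le_one]
  have hfinite : a ≠ 0 → (unitBallZeros a).Finite := fun hne => by
    obtain ⟨n, hn⟩ := exists_isLastMaxNormIndex ha' hne
    exact Set.finite_of_encard_le_coe (hn.encard_unitBallZeros_le ha')
  rw [hzeros]
  exact ⟨hfinite, fun hinf => by_contra fun hne => hinf (hfinite hne)⟩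
end

section
/- Let p be a prime, K = algebraic closure of 𝔽_p applied to 𝔽_p(T) (i.e. K = \overline{𝔽_p}(T) or simply 𝔽_p(T)), and define σ : K² → K² by σ(x₁, x₂) = (T·x₁, (T+1)·x₂). Let q = (1,1) and V = { (a,b) ∈ K² : b − a = 1 }. Then: (a) σ^{p^d}(q) ∈ V for every d ≥ 0, so the orbit meets V infinitely often; (b) there are no integers i, j with j ≥ 1 such that σ^{i+jm}(q) ∈ V for all m ≥ 0. -/
open Polynomial

lemma poly_key {p : ℕ} [Fact p.Prime] :
    ∀ m : ℕ, (X + 1 : (ZMod p)[X]) ^ m - X ^ m = 1 → ∃ d : ℕ, m = p ^ d := by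
  intro m
  induction m using Nat.strong_induction_on with
  | _ m ih =>
    intro h
    rcases Nat.eq_zero_or_pos m with rfl | hm
    · simp at h
    by_cases hp : p ∣ m
    · obtain ⟨k, rfl⟩ := hp
      have hp2 : 2 ≤ p := (Fact.out : p.Prime).two_le
      rcases Nat.eq_zero_or_pos k with rfl | hk
      · simp at hm
      have hklt : k < p * k := by nlinarith
      have hfrob : ((X + 1 : (ZMod p)[X]) ^ k - X ^ k) ^ p = 1 := by
        rw [sub_pow_char, ← pow_mul, ← pow_mul, mul_comm k p]
        exact h
      have h1 : (X + 1 : (ZMod p)[X]) ^ k - X ^ k = 1 := by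
        have : ((X + 1 : (ZMod p)[X]) ^ k - X ^ k - 1) ^ p = 0 := by
          rw [sub_pow_char, hfrob, one_pow, sub_self]
        have := pow_eq_zero_iff (Fact.out : p.Prime).ne_zero |>.mp this
        have := sub_eq_zero.mp this
        linear_combination this
      obtain ⟨d, rfl⟩ := ih k hklt h1
      exact ⟨d + 1, by ring⟩
    · -- p ∤ m : show m = 1
      rcases Nat.lt_or_ge m 2 with hm2 | hm2
      · interval_cases m
        · exact ⟨0, by simp⟩
      · exfalso
        have hc := congrArg (fun f => Polynomial.coeff f (m - 1)) h
        simp only [coeff_sub, coeff_X_add_one_pow, coeff_one] at hc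
        rw [coeff_X_pow] at hc
        have h1 : m - 1 ≠ m := by omega
        have h2 : m - 1 ≠ 0 := by omega
        rw [if_neg h1, if_neg h2, Nat.choose_symm (by omega : 1 ≤ m), Nat.choose_one_right] at hc
        have : (m : ZMod p) = 0 := by simpa using hc
        exact hp ((ZMod.natCast_eq_zero_iff m p).mp this)

lemma iter_eq {p : ℕ} [Fact p.Prime]
    (σ : (RatFunc (ZMod p) × RatFunc (ZMod p)) → (RatFunc (ZMod p) × RatFunc (ZMod p)))
    (hσ : ∀ x, σ x = (RatFunc.X * x.1, (RatFunc.X + 1) * x.2)) (n : ℕ) :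
    σ^[n] (1, 1) = (RatFunc.X ^ n, (RatFunc.X + 1) ^ n) := by
  induction n with
  | zero => simp
  | succ n ih =>
    rw [Function.iterate_succ_apply', ih, hσ]
    simp [pow_succ, mul_comm]

lemma ratfunc_eq_iff {p : ℕ} [Fact p.Prime] (n : ℕ)
    (h : (RatFunc.X + 1 : RatFunc (ZMod p)) ^ n - RatFunc.X ^ n = 1) :
    (X + 1 : (ZMod p)[X]) ^ n - X ^ n = 1 := by
  apply RatFunc.algebraMap_injective (ZMod p)
  push_cast [map_sub, map_pow, map_add, map_one, RatFunc.algebraMap_X] at h ⊢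
  simpa using h

/-- Lech's positive-characteristic example: for `σ(x₁,x₂) = (T x₁, (T+1) x₂)` on
`𝔽_p(T)²` and `q = (1,1)`, the orbit meets `V = {x₂ - x₁ = 1}` at every `m = p^d`, but
the return set contains no infinite arithmetic progression. -/
theorem stmt11 (p : ℕ) [Fact p.Prime]
    (σ : (RatFunc (ZMod p) × RatFunc (ZMod p)) → (RatFunc (ZMod p) × RatFunc (ZMod p)))
    (hσ : ∀ x, σ x = (RatFunc.X * x.1, (RatFunc.X + 1) * x.2))
    (q : RatFunc (ZMod p) × RatFunc (ZMod p)) (hq : q = (1, 1))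
    (V : Set (RatFunc (ZMod p) × RatFunc (ZMod p)))
    (hV : V = {x | x.2 - x.1 = 1}) :
    (∀ d : ℕ, σ^[p ^ d] q ∈ V) ∧
    ¬ ∃ i j : ℕ, 1 ≤ j ∧ ∀ m : ℕ, σ^[i + j * m] q ∈ V := by
  subst hq hV
  have hchar : CharP (RatFunc (ZMod p)) p :=
    charP_of_injective_algebraMap (RatFunc.algebraMap_injective (ZMod p)) p
  constructor
  · intro d
    rw [iter_eq σ hσ]
    show (RatFunc.X + 1 : RatFunc (ZMod p)) ^ p ^ d - RatFunc.X ^ p ^ d = 1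
    rw [add_pow_char_pow]
    simp
  · rintro ⟨i, j, hj, hall⟩
    have hS : ∀ m : ℕ, ∃ d : ℕ, i + j * m = p ^ d := by
      intro m
      have h := hall m
      rw [iter_eq σ hσ] at h
      exact poly_key _ (ratfunc_eq_iff _ h)
    obtain ⟨d, hd⟩ := hS (i + j + 1)
    obtain ⟨e, he⟩ := hS (i + j + 2)
    have hp2 : 2 ≤ p := (Fact.out : p.Prime).two_le
    have hja : j < p ^ d := by nlinarith
    have hlt : p ^ d < p ^ e := by nlinarith
    have hde : d < e := (Nat.pow_lt_pow_iff_right (by omega)).mp hlt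
    have : p ^ (d + 1) ≤ p ^ e := Nat.pow_le_pow_right (by omega) (by omega)
    rw [pow_succ] at this
    nlinarith
end

section
/- Let p be prime and let u, t, s be algebraically independent over 𝔽_p. For a natural number m, define E(m) = (u+t+s)^m − (u+t)^m − (u+s)^m − (t+s)^m + u^m + t^m + s^m in 𝔽_p(u,t,s). Then E(m) = 0 if and only if m ∈ { p^i : i ∈ ℕ } ∪ { p^i + p^j : i, j ∈ ℕ }. -/
open MvPolynomial Finset

private lemma lucas_pow (p : ℕ) [Fact p.Prime] (j : ℕ) :
    ∀ q : ℕ, (p ^ j * q).choose (p ^ j) ≡ q [MOD p] := by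
  induction j with
  | zero => intro q; simpa [Nat.choose_one_right] using Nat.ModEq.refl q
  | succ j ih =>
    intro q
    have hp := (Fact.out : p.Prime).pos
    have e1 : p ^ (j + 1) * q = p * (p ^ j * q) := by ring
    have e2 : p ^ (j + 1) = p * p ^ j := by ring
    rw [e1, e2]
    have lucas := Choose.choose_modEq_choose_mod_mul_choose_div_nat
      (p := p) (n := p * (p ^ j * q)) (k := p * p ^ j)
    rw [Nat.mul_mod_right, Nat.mul_mod_right,
      Nat.mul_div_cancel_left _ hp, Nat.mul_div_cancel_left _ hp,
      Nat.choose_zero_right, one_mul] at lucas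
    exact lucas.trans (ih q)

private lemma choose_padic_ne (p : ℕ) [Fact p.Prime] (n : ℕ) (hn : 0 < n) :
    ¬ (p : ℕ) ∣ n.choose (p ^ (n.factorization p)) := by
  have hp : p.Prime := Fact.out
  have h := lucas_pow p (n.factorization p) (n / p ^ n.factorization p)
  rw [Nat.ordProj_mul_ordCompl_eq_self n p] at h
  intro hdvd
  have : p ∣ n / p ^ n.factorization p := (Nat.modEq_zero_iff_dvd.mp
    ((Nat.modEq_zero_iff_dvd.mpr hdvd).symm.trans h).symm)
  exact Nat.not_dvd_ordCompl hp hn.ne' this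

open MvPolynomial Finset

private lemma expand_three (R : Type*) [CommSemiring R] (n : ℕ) :
    ((X 0 + X 1 + X 2 : MvPolynomial (Fin 3) R) ^ n)
      = ∑ x ∈ Finset.range (n + 1), ∑ y ∈ Finset.range (x + 1),
          monomial (Finsupp.single 0 y + Finsupp.single 1 (x - y) + Finsupp.single 2 (n - x))
            ((n.choose x * x.choose y : ℕ) : R) := by
  rw [add_pow]
  refine Finset.sum_congr rfl fun x hx => ?_
  rw [add_pow, Finset.sum_mul, Finset.sum_mul]
  refine Finset.sum_congr rfl fun y hy => ?_
  have cast_eq : ∀ (k : ℕ), ((k : ℕ) : MvPolynomial (Fin 3) R) = C (k : R) := by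
    intro k; simp
  simp only [cast_eq, X_pow_eq_monomial]
  simp [monomial_mul, C_mul_monomial, mul_comm, mul_left_comm, mul_assoc]
  rw [cast_eq (n.choose x), cast_eq (x.choose y), C_mul_monomial, C_mul_monomial, mul_one]

private lemma coeff_three (R : Type*) [CommSemiring R] (n a b c : ℕ) (h : a + b + c = n) :
    MvPolynomial.coeff (Finsupp.single 0 a + Finsupp.single 1 b + Finsupp.single 2 c)
      ((X 0 + X 1 + X 2 : MvPolynomial (Fin 3) R) ^ n)
      = ((n.choose (a + b) * (a + b).choose a : ℕ) : R) := by
  have key : ∀ x y : ℕ, y ≤ x →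
      ((Finsupp.single (0 : Fin 3) y + Finsupp.single 1 (x - y) + Finsupp.single 2 (n - x))
        = (Finsupp.single (0 : Fin 3) a + Finsupp.single 1 b + Finsupp.single 2 c)) →
      (x = a + b ∧ y = a) := by
    intro x y hyx heq
    have h0 := DFunLike.congr_fun heq (0 : Fin 3)
    have h1 := DFunLike.congr_fun heq (1 : Fin 3)
    simp [Finsupp.single_apply, Fin.ext_iff] at h0 h1
    omega
  rw [expand_three]
  simp only [MvPolynomial.coeff_sum, MvPolynomial.coeff_monomial]
  rw [Finset.sum_eq_single (a + b)]
  · rw [Finset.sum_eq_single a]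
    · have e1 : a + b - a = b := by omega
      have e2 : n - (a + b) = c := by omega
      rw [e1, e2, if_pos rfl]
    · intro y hy hne
      rw [if_neg]
      intro heq
      exact hne (key _ _ (by simpa using Nat.lt_succ_iff.mp (Finset.mem_range.mp hy)) heq).2
    · intro hmem
      exact absurd (Finset.mem_range.mpr (by omega)) hmem
  · intro x hx hne
    refine Finset.sum_eq_zero fun y hy => ?_
    rw [if_neg]
    intro heq
    exact hne (key _ _ (Nat.lt_succ_iff.mp (Finset.mem_range.mp hy)) heq).1
  · intro hmem
    exact absurd (Finset.mem_range.mpr (Nat.lt_succ_of_le (by omega))) hmem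

private lemma coeff_zero_of_not_var {R : Type*} [CommSemiring R]
    {q : MvPolynomial (Fin 3) R} {k : Fin 3} (hq : k ∉ q.vars)
    {d : Fin 3 →₀ ℕ} (hd : d k ≠ 0) : MvPolynomial.coeff d q = 0 := by
  by_contra hc
  exact hq ((MvPolynomial.mem_vars k).mpr
    ⟨d, MvPolynomial.mem_support_iff.mpr hc, Finsupp.mem_support_iff.mpr hd⟩)

private lemma not_var_add_pow {R : Type*} [CommSemiring R] [Nontrivial R]
    (i j k : Fin 3) (hki : k ≠ i) (hkj : k ≠ j) (n : ℕ) :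
    k ∉ ((X i + X j : MvPolynomial (Fin 3) R) ^ n).vars := by
  intro hk
  have h1 := MvPolynomial.vars_pow (X i + X j : MvPolynomial (Fin 3) R) n hk
  have h2 := MvPolynomial.vars_add_subset (X i : MvPolynomial (Fin 3) R) (X j) h1
  rw [MvPolynomial.vars_X, MvPolynomial.vars_X] at h2
  simp only [Finset.mem_union, Finset.mem_singleton] at h2
  tauto

private lemma not_var_pow {R : Type*} [CommSemiring R] [Nontrivial R]
    (i k : Fin 3) (hki : k ≠ i) (n : ℕ) :
    k ∉ ((X i : MvPolynomial (Fin 3) R) ^ n).vars := by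
  intro hk
  have h1 := MvPolynomial.vars_pow (X i : MvPolynomial (Fin 3) R) n hk
  rw [MvPolynomial.vars_X] at h1
  simp only [Finset.mem_singleton] at h1
  exact hki h1

/-- Derksen's example: `E(m) = (u+t+s)^m - (u+t)^m - (u+s)^m - (t+s)^m + u^m + t^m + s^m`
vanishes in `𝔽_p[u,t,s]` iff `m` is a power of `p` or a sum of two powers of `p`. -/
theorem stmt13 (p : ℕ) [Fact p.Prime] (m : ℕ)
    (u t s : MvPolynomial (Fin 3) (ZMod p))
    (hu : u = MvPolynomial.X 0) (ht : t = MvPolynomial.X 1) (hs : s = MvPolynomial.X 2) :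
    ((u + t + s) ^ m - (u + t) ^ m - (u + s) ^ m - (t + s) ^ m + u ^ m + t ^ m + s ^ m
        = 0) ↔
      ((∃ i : ℕ, m = p ^ i) ∨ (∃ i j : ℕ, m = p ^ i + p ^ j)) := by
  have hp : p.Prime := Fact.out
  haveI : Fact (1 < p) := ⟨hp.one_lt⟩
  constructor
  · -- hard direction
    intro hE
    by_contra hcon
    push_neg at hcon
    obtain ⟨h1, h2⟩ := hcon
    -- m ≠ 0 would still be fine; handle m = 0
    rcases Nat.eq_zero_or_pos m with hm0 | hm
    · subst hm0
      simp only [pow_zero] at hE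
      norm_num at hE
    -- set up exponents
    set a := p ^ (m.factorization p) with ha_def
    have haM : a ∣ m := Nat.ordProj_dvd m p
    have haM' : a ≤ m := Nat.le_of_dvd hm haM
    have ha_pos : 0 < a := pow_pos hp.pos _
    set n1 := m - a with hn1_def
    have hn1 : 0 < n1 := by
      rcases Nat.lt_or_ge a m with h | h
      · omega
      · exfalso; exact h1 (m.factorization p) (by omega)
    set b := p ^ (n1.factorization p) with hb_def
    have hbN : b ∣ n1 := Nat.ordProj_dvd n1 p
    have hbN' : b ≤ n1 := Nat.le_of_dvd hn1 hbN
    have hb_pos : 0 < b := pow_pos hp.pos _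
    set r := n1 - b with hr_def
    have hr : 0 < r := by
      rcases Nat.lt_or_ge b n1 with h | h
      · omega
      · exfalso
        exact h2 (m.factorization p) (n1.factorization p) (by omega)
    have hsum : b + r + a = m := by omega
    set d : Fin 3 →₀ ℕ := Finsupp.single 0 b + Finsupp.single 1 r + Finsupp.single 2 a
      with hd_def
    have hd0 : d 0 = b := by simp [hd_def, Finsupp.single_apply]
    have hd1 : d 1 = r := by simp [hd_def, Finsupp.single_apply]
    have hd2 : d 2 = a := by simp [hd_def, Finsupp.single_apply]
    have hcoeff := congrArg (MvPolynomial.coeff d) hE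
    rw [hu, ht, hs] at hcoeff
    simp only [MvPolynomial.coeff_add, MvPolynomial.coeff_sub, MvPolynomial.coeff_zero]
      at hcoeff
    rw [coeff_zero_of_not_var (not_var_add_pow 0 1 2 (by decide) (by decide) m)
        (by rw [hd2]; omega),
      coeff_zero_of_not_var (not_var_add_pow 0 2 1 (by decide) (by decide) m)
        (by rw [hd1]; omega),
      coeff_zero_of_not_var (not_var_add_pow 1 2 0 (by decide) (by decide) m)
        (by rw [hd0]; omega),
      coeff_zero_of_not_var (not_var_pow 0 1 (by decide) m) (by rw [hd1]; omega),
      coeff_zero_of_not_var (not_var_pow 1 0 (by decide) m) (by rw [hd0]; omega),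
      coeff_zero_of_not_var (not_var_pow 2 0 (by decide) m) (by rw [hd0]; omega),
      hd_def, coeff_three (ZMod p) m b r a hsum] at hcoeff
    have hbr : b + r = n1 := by omega
    have hmain : ¬ p ∣ m.choose (b + r) * (b + r).choose b := by
      rw [hbr]
      intro hdvd
      rcases (hp.dvd_mul.mp hdvd) with h | h
      · have : m.choose n1 = m.choose a := by
          rw [hn1_def]
          exact Nat.choose_symm haM'
        rw [this, ha_def] at h
        exact choose_padic_ne p m hm h
      · rw [hb_def] at h
        exact choose_padic_ne p n1 hn1 h
    have : ((m.choose (b + r) * (b + r).choose b : ℕ) : ZMod p) ≠ 0 := by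
      rwa [Ne, ZMod.natCast_eq_zero_iff]
    simp only [sub_zero, add_zero] at hcoeff
    exact this hcoeff
  · -- easy direction
    intro hm
    subst hu ht hs
    rcases hm with ⟨i, rfl⟩ | ⟨i, j, rfl⟩
    · simp only [add_pow_char_pow]
      ring
    · simp only [pow_add, add_pow_char_pow]
      ring
end

section
/- Define σ : ℂ⁴ → ℂ⁴ by σ(a,b,c,d) = (a, b − 3d² − 3da² − a⁴, ωc, d + a²) where ω = e^{πi/k} for a fixed integer k ≥ 1. Let X = { (a,b,c,d) ∈ ℂ⁴ : a + a²b + c² + d³ = 0 } and q = (−1,−1,1,1). Then { m ∈ ℤ : σ^m(q) ∈ X } = kℤ, and the orbit of q under σ is infinite. -/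
/-!
Along the orbit of `q = (-1,-1,1,1)` the first coordinate stays `-1`, so `σ` acts on the remaining
coordinates by `(b, c, d) ↦ (b - 3d² - 3d - 1, ωc, d + 1)`; hence `σ^m q = (-1, -(1+m)³, ωᵐ, 1+m)`.
On this point the equation of `X` reduces to `ω^{2m} = 1`, and `ω² = e^{2πi/k}` is a primitive
`k`-th root of unity. The fourth coordinate `1 + m` makes the orbit infinite.
-/

theorem Equiv.Perm.zpow_apply_eq_of_apply_eq_succ {α : Type*} (σ : Equiv.Perm α) {f : ℤ → α}
    (hf : ∀ n, σ (f n) = f (n + 1)) (n : ℤ) : (σ ^ n) (f 0) = f n := by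
  induction n using Int.induction_on with
  | zero => rfl
  | succ n ih => rw [← hf, ← ih, ← Equiv.Perm.mul_apply, ← zpow_one_add, add_comm]
  | pred n ih =>
    apply σ.injective
    rw [← Equiv.Perm.mul_apply, ← zpow_one_add, hf, add_sub_cancel, sub_add_cancel, ih]

theorem Complex.exp_pi_mul_I_div_zpow_two_mul_eq_one_iff {k : ℕ} (hk : k ≠ 0) (m : ℤ) :
    Complex.exp (Real.pi * Complex.I / k) ^ (2 * m) = 1 ↔ (k : ℤ) ∣ m := by
  rw [zpow_mul, zpow_two, ← Complex.exp_add, ← add_div, ← two_mul, ← mul_assoc]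
  exact (Complex.isPrimitiveRoot_exp k hk).zpow_eq_one_iff_dvd m

namespace RussellKoras

def map (ω : ℂ) (x : ℂ × ℂ × ℂ × ℂ) : ℂ × ℂ × ℂ × ℂ :=
  (x.1, x.2.1 - 3 * x.2.2.2 ^ 2 - 3 * x.2.2.2 * x.1 ^ 2 - x.1 ^ 4, ω * x.2.2.1, x.2.2.2 + x.1 ^ 2)

def equation (x : ℂ × ℂ × ℂ × ℂ) : ℂ :=
  x.1 + x.1 ^ 2 * x.2.1 + x.2.2.1 ^ 2 + x.2.2.2 ^ 3

noncomputable def orbit (ω : ℂ) (m : ℤ) : ℂ × ℂ × ℂ × ℂ :=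
  (-1, -(1 + m) ^ 3, ω ^ m, 1 + m)

theorem orbit_zero (ω : ℂ) : orbit ω 0 = (-1, -1, 1, 1) := by
  simp [orbit]

theorem map_orbit {ω : ℂ} (hω : ω ≠ 0) (m : ℤ) : map ω (orbit ω m) = orbit ω (m + 1) := by
  simp only [map, orbit, Int.cast_add, Int.cast_one, zpow_add_one₀ hω, Prod.mk.injEq]
  exact ⟨trivial, by ring, mul_comm _ _, by ring⟩

theorem equation_orbit {ω : ℂ} (hω : ω ≠ 0) (m : ℤ) : equation (orbit ω m) = ω ^ (2 * m) - 1 := by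
  rw [equation, orbit, two_mul, zpow_add₀ hω]
  ring

theorem orbit_injective (ω : ℂ) : Function.Injective (orbit ω) := fun m n h => by
  simpa [orbit] using congrArg (fun x => x.2.2.2) h

end RussellKoras

/-- The Russell–Koras example: for the automorphism
`σ(a,b,c,d) = (a, b - 3d² - 3da² - a⁴, ωc, d + a²)` with `ω = e^{πi/k}`,
the hypersurface `X = {a + a²b + c² + d³ = 0}`, and `q = (-1,-1,1,1)`, the return set
`{m ∈ ℤ : σ^m(q) ∈ X}` is exactly `kℤ`, and the orbit of `q` is infinite. -/
theorem stmt16 (k : ℕ) (hk : 1 ≤ k)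
    (ω : ℂ) (hω : ω = Complex.exp (Real.pi * Complex.I / k))
    (σ : Equiv.Perm (ℂ × ℂ × ℂ × ℂ))
    (hσ : ∀ x : ℂ × ℂ × ℂ × ℂ, σ x =
      (x.1, x.2.1 - 3 * x.2.2.2 ^ 2 - 3 * x.2.2.2 * x.1 ^ 2 - x.1 ^ 4,
        ω * x.2.2.1, x.2.2.2 + x.1 ^ 2))
    (X : Set (ℂ × ℂ × ℂ × ℂ))
    (hX : X = {x : ℂ × ℂ × ℂ × ℂ |
      x.1 + x.1 ^ 2 * x.2.1 + x.2.2.1 ^ 2 + x.2.2.2 ^ 3 = 0})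
    (q : ℂ × ℂ × ℂ × ℂ) (hq : q = (-1, -1, 1, 1)) :
    {m : ℤ | (σ ^ m) q ∈ X} = {m : ℤ | (k : ℤ) ∣ m} ∧
    (Set.range fun m : ℤ => (σ ^ m) q).Infinite := by
  have hω0 : ω ≠ 0 := hω ▸ Complex.exp_ne_zero _
  have hσ_orbit (m : ℤ) : σ (RussellKoras.orbit ω m) = RussellKoras.orbit ω (m + 1) := by
    rw [hσ, ← RussellKoras.map_orbit hω0]
    rfl
  have horbit (m : ℤ) : (σ ^ m) q = RussellKoras.orbit ω m := by
    rw [hq, ← RussellKoras.orbit_zero ω]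
    exact σ.zpow_apply_eq_of_apply_eq_succ hσ_orbit m
  refine ⟨Set.ext fun m => ?_, ?_⟩
  · have hmem : (σ ^ m) q ∈ X ↔ RussellKoras.equation (RussellKoras.orbit ω m) = 0 := by
      rw [horbit, hX]
      rfl
    rw [Set.mem_ofPred_eq, Set.mem_ofPred_eq, hmem, RussellKoras.equation_orbit hω0,
      sub_eq_zero, hω, Complex.exp_pi_mul_I_div_zpow_two_mul_eq_one_iff (by omega)]
  · simp_rw [horbit]
    exact Set.infinite_range_of_injective (RussellKoras.orbit_injective ω)
end

section
/- Let μ : ℂ³ → ℂ³ be the polynomial automorphism μ(a,b,d) = (a, b − 3d² − 3da² − a⁴, d + a²). Then μ is not linearizable: there is no polynomial automorphism ρ of ℂ³ and affine linear automorphism L with μ = ρ ∘ L ∘ ρ⁻¹. -/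
/-!
If `μ = ρ ∘ L ∘ ρ⁻¹` with `ρ` a polynomial automorphism and `L` affine, then, since `μ` fixes the
origin, `L` fixes `ρ⁻¹ 0`, and the chain rule makes the linear part of `L` conjugate to the
Jacobian of `μ` at the origin, which is the identity. So `L = id` and hence `μ = id`, which it
is not.
-/

open ContinuousLinearMap Function

theorem eq_one_of_mul_eq_one_of_mul_mul_eq_one {M : Type*} [Monoid M] {a b l : M}
    (hba : b * a = 1) (h : a * l * b = 1) : l = 1 :=
  calc l = b * a * l * (b * a) := by rw [hba, one_mul, mul_one]
    _ = b * (a * l * b) * a := by simp only [mul_assoc]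
    _ = 1 := by rw [h, mul_one, hba]

section Conjugation

variable {𝕜 E F : Type*} [NontriviallyNormedField 𝕜] [NormedAddCommGroup E] [NormedSpace 𝕜 E]
  [NormedAddCommGroup F] [NormedSpace 𝕜 F]

theorem HasFDerivAt.comp_eq_id_of_leftInverse {f : E → F} {g : F → E} {f' : E →L[𝕜] F}
    {g' : F →L[𝕜] E} {x : E} (h : LeftInverse g f) (hf : HasFDerivAt f f' x)
    (hg : HasFDerivAt g g' (f x)) : g'.comp f' = .id 𝕜 E :=
  (hg.comp x hf).unique (by rw [h.comp_eq_id]; exact hasFDerivAt_id x)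

theorem eq_id_of_conj_affine_of_hasFDerivAt_id {μ ρ ρi : E → E} (L : E →L[𝕜] E) (b : E)
    (hli : LeftInverse ρi ρ) (hri : RightInverse ρi ρ) (hconj : ∀ x, μ x = ρ (L (ρi x) + b))
    {p : E} (hp : μ p = p) (hρ : DifferentiableAt 𝕜 ρ (ρi p))
    (hρi : DifferentiableAt 𝕜 ρi p) (hμ : HasFDerivAt μ (.id 𝕜 E) p) : μ = id := by
  set q := ρi p
  have hq_fixed : L q + b = q := by rw [← hli (L q + b), ← hconj, hp]
  have hBA : (fderiv 𝕜 ρi p).comp (fderiv 𝕜 ρ q) = .id 𝕜 E :=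
    HasFDerivAt.comp_eq_id_of_leftInverse hli hρ.hasFDerivAt (by rw [hri p]; exact hρi.hasFDerivAt)
  have hμ' : HasFDerivAt μ ((fderiv 𝕜 ρ q).comp (L.comp (fderiv 𝕜 ρi p))) p := by
    have hinner := (L.hasFDerivAt.comp p hρi.hasFDerivAt).add_const b
    have hρ' : HasFDerivAt ρ (fderiv 𝕜 ρ q) (L q + b) := by rw [hq_fixed]; exact hρ.hasFDerivAt
    exact (hρ'.comp p hinner).congr_of_eventuallyEq (.of_forall hconj)
  have hL : L = .id 𝕜 E :=
    eq_one_of_mul_eq_one_of_mul_mul_eq_one hBA (hμ'.unique hμ)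
  have hb : b = 0 := by simpa [hL] using hq_fixed
  funext x
  rw [hconj, hL, hb, id_apply, add_zero, hri x, Function.id_def]

end Conjugation

theorem differentiable_of_forall_apply_eq_eval {𝕜 : Type*} [NontriviallyNormedField 𝕜]
    {σ ι : Type*} [Fintype σ] [Fintype ι] {f : (σ → 𝕜) → ι → 𝕜}
    (P : ι → MvPolynomial σ 𝕜) (hf : ∀ x i, f x i = MvPolynomial.eval x (P i)) :
    Differentiable 𝕜 f := by
  refine differentiable_pi.2 fun i x => ?_
  simp only [hf]
  exact (AnalyticOnNhd.eval_continuousLinearMap (.id 𝕜 (σ → 𝕜)) (P i) x trivial).differentiableAt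

def mu (x : Fin 3 → ℂ) : Fin 3 → ℂ :=
  ![x 0, x 1 - 3 * x 2 ^ 2 - 3 * x 2 * x 0 ^ 2 - x 0 ^ 4, x 2 + x 0 ^ 2]

theorem mu_zero : mu 0 = 0 := by
  funext i
  fin_cases i <;> simp [mu]

theorem mu_ne_id : mu ≠ id := fun h => by
  simpa [mu] using congrFun (congrFun h ![1, 0, 0]) 2

theorem hasFDerivAt_mu_zero : HasFDerivAt mu (.id ℂ _) 0 := by
  have h : ∀ i, HasFDerivAt (fun x : Fin 3 → ℂ => x i) (proj i : (Fin 3 → ℂ) →L[ℂ] ℂ) 0 :=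
    fun i => hasFDerivAt_apply i 0
  refine hasFDerivAt_pi'.2 fun i => ?_
  fin_cases i
  · exact h 0
  · refine ((((h 1).sub (((h 2).pow 2).const_mul 3)).sub
      (((h 2).const_mul 3).mul ((h 0).pow 2))).sub ((h 0).pow 4)).congr_fderiv ?_
    ext v
    simp
  · refine ((h 2).add ((h 0).pow 2)).congr_fderiv ?_
    ext v
    simp

/-- The automorphism `μ(a,b,d) = (a, b - 3d² - 3da² - a⁴, d + a²)` of `ℂ³` is not
linearizable: there is no polynomial automorphism `ρ` of `ℂ³` and affine linear
automorphism `L` with `μ = ρ ∘ L ∘ ρ⁻¹`. -/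
theorem stmt18 (μ : (Fin 3 → ℂ) → (Fin 3 → ℂ))
    (hμ : ∀ x, μ x =
      ![x 0, x 1 - 3 * x 2 ^ 2 - 3 * x 2 * x 0 ^ 2 - x 0 ^ 4, x 2 + x 0 ^ 2]) :
    ¬ ∃ (ρ ρi : (Fin 3 → ℂ) → (Fin 3 → ℂ))
        (Pρ Pρi : Fin 3 → MvPolynomial (Fin 3) ℂ)
        (M : Matrix (Fin 3) (Fin 3) ℂ) (b : Fin 3 → ℂ),
      (∀ x i, ρ x i = MvPolynomial.eval x (Pρ i)) ∧
      (∀ x i, ρi x i = MvPolynomial.eval x (Pρi i)) ∧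
      Function.LeftInverse ρi ρ ∧ Function.RightInverse ρi ρ ∧
      IsUnit M ∧
      (∀ x, μ x = ρ (M.mulVec (ρi x) + b)) := by
  rintro ⟨ρ, ρi, Pρ, Pρi, M, b, hρ, hρi, hli, hri, -, hconj⟩
  obtain rfl : μ = mu := funext hμ
  exact mu_ne_id <| eq_id_of_conj_affine_of_hasFDerivAt_id
    (LinearMap.toContinuousLinearMap M.mulVecLin) b hli hri hconj mu_zero
    (differentiable_of_forall_apply_eq_eval Pρ hρ _)
    (differentiable_of_forall_apply_eq_eval Pρi hρi _) hasFDerivAt_mu_zero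
end
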